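/- Let 1 ≤ p, q ≤ ∞ with conjugate exponent p' of p. Let ψ_m, ψ_k ∈ 𝒮(ℝ^d) with supp ψ_k ⊂ {x : |x−k|_∞ ≤ 1}, supp ψ_m ⊂ {x : |x−m|_∞ ≤ 1}, ‖ψ_m‖_q ≤ C_m, ‖ψ_k‖_{p'} ≤ C_k, and let φ ∈ 𝒮(ℝ^d) with C_{N,φ} = sup_{|α|≤N} ‖∂^α φ‖_1. Define T_{m,k} f = ψ_m · ℱ^{-1}(φ · ℱ(ψ_k f)). Then ‖T_{m,k} f‖_q ≤ C(d,N) C_m C_k C_{N,φ} ⟨m−k⟩^{-N} ‖f‖_p for all f ∈ 𝒮. -/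

import Mathlib

/-!
The kernel of `f ↦ 𝓕⁻ (φ · 𝓕 f)` is `(x, y) ↦ 𝓕 φ (y - x)`. Since `‖z‖ ^ N ‖𝓕 φ z‖` is bounded by
the `L¹` norms of the first `N` derivatives of `φ` (integration by parts), the kernel decays like
`C_{N,φ} ⟨y - x⟩ ^ (-N)`, and for `x` near `m` and `y` near `k` this is at most
`C(d, N) C_{N,φ} ⟨m - k⟩ ^ (-N)`. Bounding the kernel by this constant on the supports gives
`‖T f‖_q ≤ sup |K| ‖ψ_k f‖₁ ‖ψ_m‖_q`, and Hölder gives `‖ψ_k f‖₁ ≤ ‖ψ_k‖_{p'} ‖f‖_p`.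
-/

open MeasureTheory FourierTransform Real
open scoped ENNReal RealInnerProductSpace

theorem ENNReal.ofReal_mul_ofReal_le (a b : ℝ) :
    ENNReal.ofReal a * ENNReal.ofReal b ≤ ENNReal.ofReal (a * b) := by
  rcases le_total 0 a with ha | ha
  · rw [ENNReal.ofReal_mul ha]
  · simp [ENNReal.ofReal_of_nonpos ha]

theorem EuclideanSpace.norm_le_sqrt_card {ι : Type*} [Fintype ι] (v : EuclideanSpace ℝ ι)
    (hv : ∀ i, |v i| ≤ 1) : ‖v‖ ≤ √(Fintype.card ι) := by
  rw [EuclideanSpace.norm_eq]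
  gcongr
  calc ∑ i, ‖v i‖ ^ 2 ≤ ∑ _i : ι, (1 : ℝ) := by
        gcongr with i
        rw [Real.norm_eq_abs, sq_le_one_iff_abs_le_one, abs_abs]
        exact hv i
    _ = Fintype.card ι := by simp

theorem rpow_one_add_norm_sq_le {F : Type*} [NormedAddCommGroup F] (z : F) (N : ℕ) :
    (1 + ‖z‖ ^ 2) ^ ((N : ℝ) / 2) ≤ 2 ^ (N - 1) * (1 + ‖z‖ ^ N) := by
  calc (1 + ‖z‖ ^ 2) ^ ((N : ℝ) / 2) = √(1 + ‖z‖ ^ 2) ^ N := by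
        rw [rpow_div_two_eq_sqrt _ (by positivity), rpow_natCast]
    _ ≤ (1 + ‖z‖) ^ N := by gcongr; exact sqrt_one_add_norm_sq_le z
    _ ≤ 2 ^ (N - 1) * (1 + ‖z‖ ^ N) := by
        simpa using add_pow_le zero_le_one (norm_nonneg z) N

section Fourier

variable {V E : Type*} [NormedAddCommGroup V] [InnerProductSpace ℝ V] [FiniteDimensional ℝ V]
  [MeasurableSpace V] [BorelSpace V] [NormedAddCommGroup E] [NormedSpace ℂ E]

theorem integral_fourier_smul_eq_of_integrable [CompleteSpace E] {f : V → ℂ} {g : V → E}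
    (hf : Integrable f) (hg : Integrable g) : ∫ ξ, 𝓕 f ξ • g ξ = ∫ x, f x • 𝓕 g x := by
  have := VectorFourier.integral_fourierIntegral_smul_eq_flip (L := innerₗ V)
    continuous_fourierChar continuous_inner hf hg
  rwa [flip_innerₗ] at this

theorem fourier_fourierChar_smul (f : V → E) (x y : V) :
    𝓕 (fun ξ ↦ 𝐞 ⟪ξ, x⟫ • f ξ) y = 𝓕 f (y - x) := by
  simp only [fourier_eq, smul_smul, ← AddChar.map_add_eq_mul, inner_sub_right]
  congr! 4
  ring

theorem MeasureTheory.Integrable.fourierChar_smul {f : V → E} (hf : Integrable f) (x : V) :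
    Integrable (fun ξ ↦ 𝐞 ⟪ξ, x⟫ • f ξ) :=
  hf.norm.mono'
    ((continuous_fourierChar.comp (continuous_id.inner continuous_const)).aestronglyMeasurable.smul
      hf.1)
    (.of_forall fun ξ ↦ by simp)

theorem fourierInv_mul_fourier_eq_integral {φ g : V → ℂ} (hφ : Integrable φ) (hg : Integrable g)
    (x : V) : 𝓕⁻ (fun ξ ↦ φ ξ * 𝓕 g ξ) x = ∫ y, g y * 𝓕 φ (y - x) := by
  calc 𝓕⁻ (fun ξ ↦ φ ξ * 𝓕 g ξ) x = ∫ ξ, 𝓕 g ξ • (𝐞 ⟪ξ, x⟫ • φ ξ) := by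
        rw [fourierInv_eq]
        congr! 2 with ξ
        simp only [Circle.smul_def, smul_eq_mul]
        ring
    _ = ∫ y, g y * 𝓕 φ (y - x) := by
        rw [integral_fourier_smul_eq_of_integrable hg (hφ.fourierChar_smul x)]
        simp only [fourier_fourierChar_smul, smul_eq_mul]

variable {φ : SchwartzMap V E} {N : ℕ} {c : ℝ}

theorem SchwartzMap.pow_mul_norm_fourier_le (h : ∀ j ≤ N, ∫ ξ, ‖iteratedFDeriv ℝ j φ ξ‖ ≤ c)
    (z : V) : ‖z‖ ^ N * ‖𝓕 ⇑φ z‖ ≤ 2 ^ N * ((N + 1) * c) := by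
  have key := pow_mul_norm_iteratedFDeriv_fourier_le (K := 0) (N := N) (φ.smooth N)
    (fun k n _ _ ↦ φ.integrable_pow_mul_iteratedFDeriv volume k n) le_rfl le_rfl z
  simp only [pow_zero, one_mul, norm_iteratedFDeriv_zero, CharP.cast_eq_zero, mul_zero, zero_add,
    Finset.range_one, Finset.singleton_product, Finset.sum_map,
    Function.Embedding.coeFn_mk] at key
  refine key.trans (mul_le_mul_of_nonneg_left ?_ (by positivity))
  calc ∑ j ∈ Finset.range (N + 1), ∫ v, ‖iteratedFDeriv ℝ j φ v‖
      ≤ ∑ _j ∈ Finset.range (N + 1), c :=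
        Finset.sum_le_sum fun j hj ↦ h j (Nat.lt_succ_iff.mp (Finset.mem_range.mp hj))
    _ = (N + 1) * c := by simp

theorem SchwartzMap.norm_fourier_le_mul_rpow_neg
    (h : ∀ j ≤ N, ∫ ξ, ‖iteratedFDeriv ℝ j φ ξ‖ ≤ c) (z : V) :
    ‖𝓕 ⇑φ z‖ ≤ 2 ^ (N - 1) * (1 + 2 ^ N * (N + 1)) * c * (1 + ‖z‖ ^ 2) ^ (-(N : ℝ) / 2) := by
  have h0 : ‖𝓕 ⇑φ z‖ ≤ c :=
    (VectorFourier.norm_fourierIntegral_le_integral_norm _ volume (innerₗ V) φ z).trans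
      (by simpa using h 0 N.zero_le)
  rw [neg_div, rpow_neg (by positivity), ← div_eq_mul_inv, le_div_iff₀ (by positivity)]
  calc ‖𝓕 ⇑φ z‖ * (1 + ‖z‖ ^ 2) ^ ((N : ℝ) / 2)
      ≤ ‖𝓕 ⇑φ z‖ * (2 ^ (N - 1) * (1 + ‖z‖ ^ N)) := by gcongr; exact rpow_one_add_norm_sq_le z N
    _ = 2 ^ (N - 1) * (‖𝓕 ⇑φ z‖ + ‖z‖ ^ N * ‖𝓕 ⇑φ z‖) := by ring
    _ ≤ 2 ^ (N - 1) * (c + 2 ^ N * ((N + 1) * c)) := by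
        gcongr 2 ^ (N - 1) * (?_ + ?_)
        exact φ.pow_mul_norm_fourier_le h z
    _ = 2 ^ (N - 1) * (1 + 2 ^ N * (N + 1)) * c := by ring

end Fourier

section Peetre

variable {F : Type*} [SeminormedAddCommGroup F] {x y m k : F} {r : ℝ}

theorem one_add_norm_sub_sq_le (hx : ‖x - m‖ ≤ r) (hy : ‖y - k‖ ≤ r) :
    1 + ‖m - k‖ ^ 2 ≤ (2 + 8 * r ^ 2) * (1 + ‖y - x‖ ^ 2) := by
  have hmk : ‖m - k‖ ≤ ‖y - x‖ + 2 * r := by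
    calc ‖m - k‖ = ‖(m - x) + (x - y) + (y - k)‖ := by congr 1; abel
      _ ≤ ‖m - x‖ + ‖x - y‖ + ‖y - k‖ := norm_add₃_le
      _ ≤ ‖y - x‖ + 2 * r := by rw [norm_sub_rev m x, norm_sub_rev x y]; linarith
  have hr : 0 ≤ r := (norm_nonneg _).trans hx
  nlinarith [norm_nonneg (m - k), norm_nonneg (y - x), sq_nonneg (‖y - x‖ - 2 * r),
    mul_nonneg (sq_nonneg r) (sq_nonneg ‖y - x‖)]

theorem rpow_neg_one_add_norm_sub_sq_le (hx : ‖x - m‖ ≤ r) (hy : ‖y - k‖ ≤ r) {s : ℝ}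
    (hs : 0 ≤ s) :
    (1 + ‖y - x‖ ^ 2) ^ (-s) ≤ (2 + 8 * r ^ 2) ^ s * (1 + ‖m - k‖ ^ 2) ^ (-s) := by
  calc (1 + ‖y - x‖ ^ 2) ^ (-s)
        = (2 + 8 * r ^ 2) ^ s * ((2 + 8 * r ^ 2) * (1 + ‖y - x‖ ^ 2)) ^ (-s) := by
        rw [mul_rpow (by positivity) (by positivity), ← mul_assoc, ← rpow_add (by positivity),
          add_neg_cancel, rpow_zero, one_mul]
    _ ≤ (2 + 8 * r ^ 2) ^ s * (1 + ‖m - k‖ ^ 2) ^ (-s) := by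
        refine mul_le_mul_of_nonneg_left ?_ (by positivity)
        exact rpow_le_rpow_of_nonpos (by positivity) (one_add_norm_sub_sq_le hx hy) (neg_nonpos.2 hs)

end Peetre

theorem SchwartzMap.norm_fourier_sub_le_of_abs_sub_le {ι : Type*} [Fintype ι]
    {φ : SchwartzMap (EuclideanSpace ℝ ι) ℂ} {N : ℕ} {c : ℝ}
    (h : ∀ j ≤ N, ∫ ξ, ‖iteratedFDeriv ℝ j φ ξ‖ ≤ c) {x y m k : EuclideanSpace ℝ ι}
    (hx : ∀ i, |(x - m) i| ≤ 1) (hy : ∀ i, |(y - k) i| ≤ 1) :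
    ‖𝓕 ⇑φ (y - x)‖ ≤ 2 ^ (N - 1) * (1 + 2 ^ N * (N + 1)) * c *
      ((2 + 8 * Fintype.card ι) ^ ((N : ℝ) / 2) * (1 + ‖m - k‖ ^ 2) ^ (-(N : ℝ) / 2)) := by
  have hc : 0 ≤ c := (integral_nonneg fun _ ↦ norm_nonneg _).trans (h 0 N.zero_le)
  have hPeetre := rpow_neg_one_add_norm_sub_sq_le (EuclideanSpace.norm_le_sqrt_card _ hx)
    (EuclideanSpace.norm_le_sqrt_card _ hy) (s := N / 2) (by positivity)
  rw [sq_sqrt (Nat.cast_nonneg _), ← neg_div] at hPeetre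
  exact (φ.norm_fourier_le_mul_rpow_neg h (y - x)).trans
    (mul_le_mul_of_nonneg_left hPeetre (by positivity))

theorem eLpNorm_mul_integral_mul_le {α β 𝕜 : Type*} [MeasurableSpace α] [MeasurableSpace β]
    [RCLike 𝕜] {μ : Measure α} {ν : Measure β} {ψ : α → 𝕜} {g : β → 𝕜} {K : α → β → 𝕜} {D : ℝ}
    (hg : Integrable g ν) (hK : ∀ x y, ψ x ≠ 0 → g y ≠ 0 → ‖K x y‖ ≤ D) (q : ℝ≥0∞) :
    eLpNorm (fun x ↦ ψ x * ∫ y, g y * K x y ∂ν) q μ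
      ≤ ENNReal.ofReal D * eLpNorm g 1 ν * eLpNorm ψ q μ := by
  have hpt : ∀ x, ‖ψ x * ∫ y, g y * K x y ∂ν‖ ≤ (D * ∫ y, ‖g y‖ ∂ν) * ‖ψ x‖ := by
    intro x
    rcases eq_or_ne (ψ x) 0 with hx | hx
    · simp [hx]
    rw [norm_mul, mul_comm ‖ψ x‖]
    gcongr
    calc ‖∫ y, g y * K x y ∂ν‖ ≤ ∫ y, ‖g y‖ * D ∂ν := by
          refine norm_integral_le_of_norm_le (hg.norm.mul_const D) (.of_forall fun y ↦ ?_)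
          rcases eq_or_ne (g y) 0 with hy | hy
          · simp [hy]
          rw [norm_mul]
          gcongr
          exact hK x y hx hy
      _ = D * ∫ y, ‖g y‖ ∂ν := by rw [integral_mul_const, mul_comm]
  calc eLpNorm (fun x ↦ ψ x * ∫ y, g y * K x y ∂ν) q μ
      ≤ ENNReal.ofReal (D * ∫ y, ‖g y‖ ∂ν) * eLpNorm ψ q μ :=
        eLpNorm_le_mul_eLpNorm_of_ae_le_mul (.of_forall hpt) q
    _ = ENNReal.ofReal D * eLpNorm g 1 ν * eLpNorm ψ q μ := by
        rw [ENNReal.ofReal_mul' (integral_nonneg fun _ ↦ norm_nonneg _),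
          ofReal_integral_norm_eq_lintegral_enorm hg, eLpNorm_one_eq_lintegral_enorm]

/-- Lemma 2.1: off-diagonal decay for `T_{m,k} f = ψ_m · ℱ⁻¹(φ · ℱ(ψ_k f))` where `ψ_m, ψ_k`
are supported in unit cubes around `m` and `k`, with `‖ψ_m‖_q ≤ C_m`, `‖ψ_k‖_{p'} ≤ C_k`
and `C_{N,φ} = sup_{|α| ≤ N} ‖∂^α φ‖₁`:
`‖T_{m,k} f‖_q ≤ C(d,N) C_m C_k C_{N,φ} ⟨m-k⟩^{-N} ‖f‖_p`. -/
theorem stmt4 (d N : ℕ) :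
    ∃ C : ℝ, 0 < C ∧
    ∀ (p q p' : ℝ≥0∞), 1 ≤ p → p ≤ ⊤ → 1 ≤ q → q ≤ ⊤ → 1/p + 1/p' = 1 →
    ∀ (m k : EuclideanSpace ℝ (Fin d))
      (ψm ψk φ f : SchwartzMap (EuclideanSpace ℝ (Fin d)) ℂ)
      (Cm Ck CNφ : ℝ),
      (Function.support ψm ⊆ {x | ∀ i, |(x - m) i| ≤ 1}) →
      (Function.support ψk ⊆ {x | ∀ i, |(x - k) i| ≤ 1}) →
      eLpNorm (fun x => ψm x) q volume ≤ ENNReal.ofReal Cm →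
      eLpNorm (fun x => ψk x) p' volume ≤ ENNReal.ofReal Ck →
      (∀ j ≤ N, (∫ ξ, ‖iteratedFDeriv ℝ j φ ξ‖) ≤ CNφ) →
      eLpNorm (fun x => ψm x *
          (𝓕⁻ (fun ξ => φ ξ * 𝓕 (fun y => ψk y * f y) ξ)) x) q volume
        ≤ ENNReal.ofReal
            (C * Cm * Ck * CNφ * (1 + ‖m - k‖ ^ 2) ^ (-(N : ℝ) / 2)) *
          eLpNorm (fun x => f x) p volume := by
  set A : ℝ := 2 ^ (N - 1) * (1 + 2 ^ N * (N + 1))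
  set B : ℝ := (2 + 8 * d) ^ ((N : ℝ) / 2)
  refine ⟨A * B, by positivity, ?_⟩
  intro p q p' _ _ _ _ hpp' m k ψm ψk φ f Cm Ck CNφ hsm hsk hCm hCk hCN
  set g := fun y ↦ ψk y * f y
  have hg : Integrable g := f.integrable.bdd_mul ψk.continuous.aestronglyMeasurable
    (.of_forall fun x ↦ SchwartzMap.norm_le_seminorm ℝ ψk x)
  set D := A * CNφ * (B * (1 + ‖m - k‖ ^ 2) ^ (-(N : ℝ) / 2))
  have hkernel (x y) (hx : ψm x ≠ 0) (hy : g y ≠ 0) : ‖𝓕 ⇑φ (y - x)‖ ≤ D := by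
    simpa using φ.norm_fourier_sub_le_of_abs_sub_le hCN (hsm hx) (hsk (left_ne_zero_of_mul hy))
  have hHolder : eLpNorm g 1 volume ≤ eLpNorm ψk p' volume * eLpNorm f p volume := by
    have : ENNReal.HolderConjugate p' p :=
      ENNReal.holderConjugate_iff.mpr (by simpa [one_div, add_comm] using hpp')
    exact eLpNorm_smul_le_mul_eLpNorm (μ := volume) (p := p') (q := p) (r := 1) (f := ⇑f)
      (φ := ⇑ψk) f.continuous.aestronglyMeasurable ψk.continuous.aestronglyMeasurable
  simp_rw [fourierInv_mul_fourier_eq_integral φ.integrable hg]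
  calc _ ≤ ENNReal.ofReal D * eLpNorm g 1 volume * eLpNorm ψm q volume :=
        eLpNorm_mul_integral_mul_le hg hkernel q
    _ ≤ ENNReal.ofReal D * (ENNReal.ofReal Ck * eLpNorm f p volume) * ENNReal.ofReal Cm := by
        gcongr
        exact hHolder.trans (by gcongr)
    _ = ENNReal.ofReal D * ENNReal.ofReal Ck * ENNReal.ofReal Cm * eLpNorm f p volume := by ring
    _ ≤ ENNReal.ofReal (D * Ck * Cm) * eLpNorm f p volume := by
        gcongr
        exact (mul_le_mul_left (ENNReal.ofReal_mul_ofReal_le _ _) _).trans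
          (ENNReal.ofReal_mul_ofReal_le _ _)
    _ = _ := by
        congr 2
        ring
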